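/- Let n ≥ 1 and let f : ℝⁿ → ℝ be continuously differentiable. For every compact set X₀ ⊆ ℝⁿ there exists T > 0 such that for every ε > 0 there exists ᾱ > 0 such that for every α ∈ (0, ᾱ], every k̄ ∈ ℕ, and every cyclic coordinate descent trajectory (x_k)_{k∈ℕ} of f with step size α satisfying x_{k̄} ∈ X₀, there exists a differentiable x : [0, T] → ℝⁿ with x(0) ∈ X₀, x'(t) = −∇f(x(t)) for all t ∈ [0, T], and ‖x_k − x((k − k̄)α)‖ ≤ ε for all k ∈ {k̄, …, k̄ + ⌊T/α⌋}. (Paper's Proposition 4.2: the random-permutations cyclic coordinate descent method is approximated by subgradient trajectories of continuously differentiable functions; for such f the Clarke subdifferential is {∇f} and the multiplicative constant is 1.) -/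

import Mathlib

/-
Interpolate the iterates piecewise linearly at the times `k α`. While the iterates stay in a ball
on which `‖∇f‖ ≤ M`, a sweep moves the point by at most `n α M`, and its mean velocity differs
from `-∇f` at its starting point by at most `n` times the oscillation of `∇f` over distances
`n α M`. So, uniformly in the starting point, the interpolant is a `δ`-approximate solution of
the integral equation `x t = x 0 - ∫₀ᵗ ∇f (x s) ds` with `δ → 0` as `α → 0`. Approximate
solutions with values in a fixed compact set and a common Lipschitz constant are uniformly
close to exact ones: otherwise, by Arzelà–Ascoli, a sequence of counterexamples has a uniformly
convergent subsequence, and its limit solves the integral equation.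
-/

/-- A cyclic coordinate descent trajectory of `f` with step size `α`: for every `k` there
are a permutation `σᵏ` of the coordinates and inner iterates `z 0, …, z n` with
`z 0 = x k`, `z i = z (i-1) - α ∇_{σᵏ i} f (z (i-1))`, and `x (k+1) = z n`, where
`∇_i f x = (∂f/∂x_i)(x) • e_i`. -/
def IsCCDTraj {n : ℕ} (f : EuclideanSpace ℝ (Fin n) → ℝ) (α : ℝ)
    (x : ℕ → EuclideanSpace ℝ (Fin n)) : Prop :=
  ∀ k : ℕ, ∃ (σ : Equiv.Perm (Fin n)) (z : Fin (n + 1) → EuclideanSpace ℝ (Fin n)),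
    z 0 = x k ∧
    (∀ i : Fin n, z i.succ
      = z i.castSucc - α • EuclideanSpace.single (σ i) (gradient f (z i.castSucc) (σ i))) ∧
    x (k + 1) = z (Fin.last n)

open Metric Set Filter Topology MeasureTheory
open scoped NNReal Interval

theorem Fin.sum_univ_succ_sub_castSucc {M : Type*} [AddCommGroup M] {n : ℕ}
    (w : Fin (n + 1) → M) : ∑ i : Fin n, (w i.succ - w i.castSucc) = w (Fin.last n) - w 0 := by
  induction n with
  | zero => simp
  | succ n ih =>
    rw [Fin.sum_univ_castSucc, Fin.succ_last]
    have := ih fun i => w i.castSucc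
    simp only [Fin.succ_castSucc, Fin.castSucc_zero] at this ⊢
    rw [this]
    abel

theorem ContDiff.continuous_gradient {F : Type*} [NormedAddCommGroup F] [InnerProductSpace ℝ F]
    [CompleteSpace F] {f : F → ℝ} (hf : ContDiff ℝ 1 f) : Continuous (gradient f) :=
  (InnerProductSpace.toDual ℝ F).symm.continuous.comp (hf.continuous_fderiv one_ne_zero)

section ArzelaAscoli

variable {E : Type*} [MetricSpace E]

theorem exists_tendstoUniformlyOn_subseq_of_lipschitzOnWith {K : Set E} (hK : IsCompact K)
    {L : ℝ≥0} {T : ℝ} (hT : 0 ≤ T) {γ : ℕ → ℝ → E}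
    (hγL : ∀ j, LipschitzOnWith L (γ j) (Icc 0 T)) (hγK : ∀ j, MapsTo (γ j) (Icc 0 T) K) :
    ∃ x : ℝ → E, Continuous x ∧ ∃ φ : ℕ → ℕ, StrictMono φ ∧
      TendstoUniformlyOn (fun j => γ (φ j)) x atTop (Icc 0 T) := by
  let Γ : ℕ → BoundedContinuousFunction (Icc 0 T) E := fun j =>
    .mkOfCompact ⟨(Icc 0 T).domRestrict (γ j), (hγL j).to_restrict.continuous⟩
  have hequi : Equicontinuous ((↑) : range Γ → Icc 0 T → E) := by
    refine (LipschitzWith.uniformEquicontinuous _ L ?_).equicontinuous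
    rintro ⟨_, j, rfl⟩
    exact (hγL j).to_restrict
  have hcompact := BoundedContinuousFunction.arzela_ascoli K hK (range Γ)
    (by rintro _ t ⟨j, rfl⟩; exact hγK j t.2) hequi
  obtain ⟨h, -, φ, hφ, hlim⟩ :=
    hcompact.tendsto_subseq fun j => subset_closure (mem_range_self j)
  refine ⟨h ∘ projIcc 0 T hT, h.continuous.comp continuous_projIcc, φ, hφ, ?_⟩
  rw [tendstoUniformlyOn_iff_tendstoUniformly_comp_coe]
  convert BoundedContinuousFunction.tendsto_iff_tendstoUniformly.1 hlim using 1
  · rfl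
  · ext t
    simp

end ArzelaAscoli

section ApproxSolution

variable {E : Type*} [NormedAddCommGroup E] [NormedSpace ℝ E]

def IsApproxIntegralSolution (F : E → E) (T δ : ℝ) (γ : ℝ → E) : Prop :=
  ∀ t ∈ Icc 0 T, ‖γ t - γ 0 - ∫ s in (0 : ℝ)..t, F (γ s)‖ ≤ δ

variable {F : E → E} {T : ℝ}

theorem exists_hasDerivAt_of_eq_integral [CompleteSpace E] (hF : Continuous F) {x : ℝ → E}
    (hx : Continuous x) (hxF : ∀ t ∈ Icc 0 T, x t = x 0 + ∫ s in (0 : ℝ)..t, F (x s)) :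
    ∃ y : ℝ → E, EqOn y x (Icc 0 T) ∧ ∀ t ∈ Icc 0 T, HasDerivAt y (F (y t)) t := by
  have hFx : Continuous fun s => F (x s) := hF.comp hx
  refine ⟨fun t => x 0 + ∫ s in (0 : ℝ)..t, F (x s), fun t ht => (hxF t ht).symm,
    fun t ht => ?_⟩
  beta_reduce
  rw [← hxF t ht]
  exact (intervalIntegral.integral_hasDerivAt_right (hFx.intervalIntegrable 0 t)
    (hFx.stronglyMeasurableAtFilter volume _) hFx.continuousAt).const_add (x 0)

theorem eq_integral_of_tendsto_of_isApproxIntegralSolution (hF : Continuous F) {K : Set E}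
    (hK : IsCompact K) {γ : ℕ → ℝ → E} {δ : ℕ → ℝ} {x : ℝ → E}
    (hγc : ∀ j, ContinuousOn (γ j) (Icc 0 T)) (hγK : ∀ j, MapsTo (γ j) (Icc 0 T) K)
    (hγ : ∀ j, IsApproxIntegralSolution F T (δ j) (γ j)) (hδ : Tendsto δ atTop (𝓝 0))
    (hx : ∀ t ∈ Icc 0 T, Tendsto (fun j => γ j t) atTop (𝓝 (x t))) :
    ∀ t ∈ Icc 0 T, x t = x 0 + ∫ s in (0 : ℝ)..t, F (x s) := by
  intro t ht
  have h0 : (0 : ℝ) ∈ Icc 0 T := ⟨le_rfl, ht.1.trans ht.2⟩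
  have hsub : Ι (0 : ℝ) t ⊆ Icc 0 T := by
    rw [uIoc_of_le ht.1]; exact Ioc_subset_Icc_self.trans (Icc_subset_Icc_right ht.2)
  obtain ⟨C, hC⟩ := hK.exists_bound_of_continuousOn hF.continuousOn
  have hint : Tendsto (fun j => ∫ s in (0 : ℝ)..t, F (γ j s)) atTop
      (𝓝 (∫ s in (0 : ℝ)..t, F (x s))) :=
    intervalIntegral.tendsto_integral_filter_of_dominated_convergence (fun _ => C)
      (Eventually.of_forall fun j =>
        ((hF.comp_continuousOn (hγc j)).mono hsub).aestronglyMeasurable measurableSet_uIoc)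
      (Eventually.of_forall fun j => ae_of_all _ fun s hs => hC _ (hγK j (hsub hs)))
      intervalIntegrable_const
      (ae_of_all _ fun s hs => (hF.tendsto _).comp (hx s (hsub hs)))
  have hres : Tendsto (fun j => γ j t - γ j 0 - ∫ s in (0 : ℝ)..t, F (γ j s)) atTop
      (𝓝 (x t - x 0 - ∫ s in (0 : ℝ)..t, F (x s))) :=
    ((hx t ht).sub (hx 0 h0)).sub hint
  have hres0 : Tendsto (fun j => γ j t - γ j 0 - ∫ s in (0 : ℝ)..t, F (γ j s)) atTop (𝓝 0) :=
    squeeze_zero_norm (fun j => hγ j t ht) hδ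
  rw [← sub_eq_zero, ← sub_sub, tendsto_nhds_unique hres hres0]

theorem exists_solution_near_isApproxIntegralSolution [CompleteSpace E] (hF : Continuous F)
    {K X₀ : Set E} (hK : IsCompact K) (hX₀ : IsClosed X₀) (L : ℝ≥0) (hT : 0 ≤ T) {ε : ℝ}
    (hε : 0 < ε) :
    ∃ δ > 0, ∀ γ : ℝ → E, LipschitzOnWith L γ (Icc 0 T) → MapsTo γ (Icc 0 T) K → γ 0 ∈ X₀ →
      IsApproxIntegralSolution F T δ γ →
      ∃ x : ℝ → E, x 0 ∈ X₀ ∧ (∀ t ∈ Icc 0 T, HasDerivAt x (F (x t)) t) ∧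
        ∀ t ∈ Icc 0 T, dist (γ t) (x t) ≤ ε := by
  by_contra! hfar
  choose γ hγL hγK hγX₀ hγ hfar using fun j : ℕ => hfar (1 / (j + 1)) Nat.one_div_pos_of_nat
  obtain ⟨x, hxc, φ, hφ, hlim⟩ :=
    exists_tendstoUniformlyOn_subseq_of_lipschitzOnWith hK hT hγL hγK
  obtain ⟨y, hyx, hy⟩ := exists_hasDerivAt_of_eq_integral hF hxc
    (eq_integral_of_tendsto_of_isApproxIntegralSolution hF hK (fun j => (hγL (φ j)).continuousOn)
      (fun j => hγK (φ j)) (fun j => hγ (φ j))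
      (tendsto_one_div_add_atTop_nhds_zero_nat.comp hφ.tendsto_atTop)
      fun t ht => hlim.tendsto_at ht)
  have h0 : (0 : ℝ) ∈ Icc 0 T := ⟨le_rfl, hT⟩
  have hy0 : y 0 ∈ X₀ := hyx h0 ▸ hX₀.mem_of_tendsto (hlim.tendsto_at h0)
    (Eventually.of_forall fun j => hγX₀ (φ j))
  obtain ⟨j, hj⟩ := (Metric.tendstoUniformlyOn_iff.1 hlim ε hε).exists
  obtain ⟨t, ht, hfar⟩ := hfar (φ j) y hy0 hy
  rw [hyx ht, dist_comm] at hfar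
  exact (hj t ht).not_gt hfar

end ApproxSolution

section PolygonalPath

variable {E : Type*} [NormedAddCommGroup E] [NormedSpace ℝ E]

noncomputable def polygonalSlope (α : ℝ) (N : ℕ) (p : ℕ → E) (s : ℝ) : E :=
  α⁻¹ • (p (min ⌊s / α⌋₊ N + 1) - p (min ⌊s / α⌋₊ N))

/-- The path through `p 0, …, p (N + 1)` at the times `0, α, …, (N + 1) α`, affine in between
and continued affinely beyond. -/
noncomputable def polygonalPath (α : ℝ) (N : ℕ) (p : ℕ → E) (t : ℝ) : E :=
  p 0 + ∫ s in (0 : ℝ)..t, polygonalSlope α N p s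

variable {α C : ℝ} {N : ℕ} {p : ℕ → E}

theorem norm_polygonalSlope_le (hα : 0 < α) (hp : ∀ k ≤ N, ‖p (k + 1) - p k‖ ≤ α * C)
    (s : ℝ) : ‖polygonalSlope α N p s‖ ≤ C := by
  rw [polygonalSlope, norm_smul, norm_inv, Real.norm_of_nonneg hα.le, inv_mul_le_iff₀ hα]
  exact hp _ (min_le_right _ _)

theorem intervalIntegrable_polygonalSlope (α : ℝ) (N : ℕ) (p : ℕ → E) (a b : ℝ) :
    IntervalIntegrable (polygonalSlope α N p) volume a b := by
  set w : ℕ → E := fun k => α⁻¹ • (p (k + 1) - p k)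
  have hmeas : StronglyMeasurable (polygonalSlope α N p) :=
    (continuous_of_discreteTopology (f := w)).stronglyMeasurable.comp_measurable
      ((Nat.measurable_floor.comp (measurable_id.div_const α)).min measurable_const)
  refine (intervalIntegrable_const (c := ∑ k ∈ Finset.range (N + 1), ‖w k‖)).mono_fun
    hmeas.aestronglyMeasurable (ae_of_all _ fun s => ?_)
  rw [Real.norm_of_nonneg (Finset.sum_nonneg fun _ _ => norm_nonneg _)]
  exact Finset.single_le_sum (f := fun k => ‖w k‖) (fun _ _ => norm_nonneg _)
    (Finset.mem_range.2 (Nat.lt_succ_of_le (min_le_right _ _)))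

@[simp]
theorem polygonalPath_zero : polygonalPath α N p 0 = p 0 := by
  simp [polygonalPath]

theorem polygonalPath_sub (s t : ℝ) :
    polygonalPath α N p t - polygonalPath α N p s = ∫ u in s..t, polygonalSlope α N p u := by
  rw [polygonalPath, polygonalPath, add_sub_add_left_eq_sub,
    intervalIntegral.integral_interval_sub_left (intervalIntegrable_polygonalSlope ..)
      (intervalIntegrable_polygonalSlope ..)]

theorem norm_polygonalPath_sub_le (hα : 0 < α) (hp : ∀ k ≤ N, ‖p (k + 1) - p k‖ ≤ α * C)
    (s t : ℝ) : ‖polygonalPath α N p t - polygonalPath α N p s‖ ≤ C * |t - s| := by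
  rw [polygonalPath_sub]
  exact intervalIntegral.norm_integral_le_of_norm_le_const fun u _ =>
    norm_polygonalSlope_le hα hp u

theorem lipschitzWith_polygonalPath (hα : 0 < α) (hp : ∀ k ≤ N, ‖p (k + 1) - p k‖ ≤ α * C) :
    LipschitzWith C.toNNReal (polygonalPath α N p) :=
  LipschitzWith.of_dist_le_mul fun t s => by
    rw [dist_eq_norm, Real.dist_eq]
    exact (norm_polygonalPath_sub_le hα hp s t).trans
      (mul_le_mul_of_nonneg_right (Real.le_coe_toNNReal C) (abs_nonneg _))

theorem floor_div_mul_le (hα : 0 < α) {s : ℝ} (hs : 0 ≤ s) : (⌊s / α⌋₊ : ℝ) * α ≤ s :=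
  (le_div_iff₀ hα).1 (Nat.floor_le (div_nonneg hs hα.le))

theorem lt_floor_div_add_one_mul (hα : 0 < α) (s : ℝ) : s < (⌊s / α⌋₊ + 1) * α :=
  (div_lt_iff₀ hα).1 (Nat.lt_floor_add_one _)

theorem floor_div_eq_of_mem_Ico (hα : 0 < α) {k : ℕ} {s : ℝ}
    (hs : s ∈ Ico (k * α) ((k + 1) * α)) : ⌊s / α⌋₊ = k := by
  have hs0 : 0 ≤ s := (mul_nonneg k.cast_nonneg hα.le).trans hs.1
  rw [Nat.floor_eq_iff (div_nonneg hs0 hα.le), le_div_iff₀ hα, div_lt_iff₀ hα]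
  exact hs

theorem polygonalPath_succ_mul_sub [CompleteSpace E] (hα : 0 < α) {k : ℕ} (hk : k ≤ N) :
    polygonalPath α N p ((k + 1) * α) - polygonalPath α N p (k * α) = p (k + 1) - p k := by
  have hslope : ∀ᵐ u, u ∈ Ι (k * α) ((k + 1) * α) →
      polygonalSlope α N p u = α⁻¹ • (p (k + 1) - p k) := by
    filter_upwards [measure_singleton ((k + 1) * α) |> compl_mem_ae_iff.2] with u hne hu
    rw [uIoc_of_le (by nlinarith)] at hu
    have hfloor := floor_div_eq_of_mem_Ico hα ⟨hu.1.le, lt_of_le_of_ne hu.2 hne⟩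
    rw [polygonalSlope, hfloor, min_eq_left hk]
  rw [polygonalPath_sub, intervalIntegral.integral_congr_ae hslope,
    intervalIntegral.integral_const, smul_smul, ← sub_mul, add_sub_cancel_left, one_mul,
    mul_inv_cancel₀ hα.ne', one_smul]

theorem polygonalPath_nat_mul [CompleteSpace E] (hα : 0 < α) {k : ℕ} (hk : k ≤ N + 1) :
    polygonalPath α N p (k * α) = p k := by
  induction k with
  | zero => simp
  | succ k ih =>
    rw [← sub_add_cancel (polygonalPath α N p _) (polygonalPath α N p (k * α)), Nat.cast_succ,
      polygonalPath_succ_mul_sub hα (Nat.le_of_succ_le_succ hk), ih (by omega), sub_add_cancel]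

theorem abs_sub_min_floor_mul_le (hα : 0 < α) {s : ℝ} (hs0 : 0 ≤ s) (hs : s ≤ (N + 1) * α) :
    |s - (min ⌊s / α⌋₊ N : ℕ) * α| ≤ α := by
  have hfloor := floor_div_mul_le hα hs0
  have hlt := lt_floor_div_add_one_mul hα s
  rw [abs_le]
  rcases le_total ⌊s / α⌋₊ N with h | h
  · rw [min_eq_left h]
    constructor <;> linarith
  · have hN : (N : ℝ) ≤ ⌊s / α⌋₊ := by exact_mod_cast h
    rw [min_eq_right h]
    constructor <;> nlinarith

theorem norm_polygonalPath_sub_vertex_le [CompleteSpace E] (hα : 0 < α)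
    (hp : ∀ k ≤ N, ‖p (k + 1) - p k‖ ≤ α * C) {s : ℝ} (hs0 : 0 ≤ s) (hs : s ≤ (N + 1) * α) :
    ‖polygonalPath α N p s - p (min ⌊s / α⌋₊ N)‖ ≤ α * C := by
  have hC : 0 ≤ C := nonneg_of_mul_nonneg_right ((norm_nonneg _).trans (hp 0 N.zero_le)) hα
  rw [← polygonalPath_nat_mul (p := p) hα ((min_le_right _ _).trans N.le_succ)]
  calc _ ≤ C * |s - (min ⌊s / α⌋₊ N : ℕ) * α| := norm_polygonalPath_sub_le hα hp _ s
    _ ≤ C * α := mul_le_mul_of_nonneg_left (abs_sub_min_floor_mul_le hα hs0 hs) hC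
    _ = α * C := mul_comm C α

end PolygonalPath

section CoordinateSweep

variable {n : ℕ}

def IsCoordinateSweep (G : EuclideanSpace ℝ (Fin n) → EuclideanSpace ℝ (Fin n)) (α : ℝ)
    (σ : Equiv.Perm (Fin n)) (z : Fin (n + 1) → EuclideanSpace ℝ (Fin n)) : Prop :=
  ∀ i : Fin n, z i.succ = z i.castSucc - α • EuclideanSpace.single (σ i) (G (z i.castSucc) (σ i))

variable {G : EuclideanSpace ℝ (Fin n) → EuclideanSpace ℝ (Fin n)} {α M θ : ℝ}
  {σ : Equiv.Perm (Fin n)} {z : Fin (n + 1) → EuclideanSpace ℝ (Fin n)}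

theorem IsCoordinateSweep.norm_succ_sub_le (hz : IsCoordinateSweep G α σ z) (hα : 0 ≤ α)
    (i : Fin n) : ‖z i.succ - z i.castSucc‖ ≤ α * ‖G (z i.castSucc)‖ := by
  rw [hz i, sub_sub_cancel_left, norm_neg, norm_smul, Real.norm_of_nonneg hα,
    PiLp.norm_single]
  exact mul_le_mul_of_nonneg_left (PiLp.norm_apply_le _ _) hα

theorem IsCoordinateSweep.norm_sub_zero_le (hz : IsCoordinateSweep G α σ z) (hα : 0 ≤ α)
    (hM0 : 0 ≤ M) (hM : ∀ y ∈ closedBall (z 0) (n * (α * M)), ‖G y‖ ≤ M) (i : Fin (n + 1)) :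
    ‖z i - z 0‖ ≤ i * (α * M) := by
  induction i using Fin.induction with
  | zero => simp
  | succ i ih =>
    have hi : (i.castSucc : ℝ) ≤ n := by exact_mod_cast i.castSucc.is_le
    have hmem : z i.castSucc ∈ closedBall (z 0) (n * (α * M)) := by
      rw [mem_closedBall, dist_eq_norm]
      exact ih.trans (mul_le_mul_of_nonneg_right hi (mul_nonneg hα hM0))
    have hstep := (hz.norm_succ_sub_le hα i).trans (mul_le_mul_of_nonneg_left (hM _ hmem) hα)
    calc ‖z i.succ - z 0‖ ≤ ‖z i.castSucc - z 0‖ + ‖z i.succ - z i.castSucc‖ :=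
          norm_sub_le_norm_sub_add_norm_sub _ _ _ |>.trans_eq (add_comm _ _)
      _ ≤ i.castSucc * (α * M) + α * M := add_le_add ih hstep
      _ = i.succ * (α * M) := by simp [Fin.val_succ]; ring

theorem IsCoordinateSweep.mem_closedBall (hz : IsCoordinateSweep G α σ z) (hα : 0 ≤ α)
    (hM0 : 0 ≤ M) (hM : ∀ y ∈ closedBall (z 0) (n * (α * M)), ‖G y‖ ≤ M) (i : Fin (n + 1)) :
    z i ∈ closedBall (z 0) (n * (α * M)) := by
  rw [Metric.mem_closedBall, dist_eq_norm]
  exact (hz.norm_sub_zero_le hα hM0 hM i).trans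
    (mul_le_mul_of_nonneg_right (by exact_mod_cast i.is_le) (mul_nonneg hα hM0))

theorem IsCoordinateSweep.inv_smul_sub_add_eq (hz : IsCoordinateSweep G α σ z) (hα : α ≠ 0) :
    α⁻¹ • (z (Fin.last n) - z 0) + G (z 0) =
      ∑ i, EuclideanSpace.single (σ i) ((G (z 0) - G (z i.castSucc)) (σ i)) := by
  have hG : ∑ i, EuclideanSpace.single (σ i) (G (z 0) (σ i)) = G (z 0) := by
    rw [Equiv.sum_comp σ fun j => EuclideanSpace.single j (G (z 0) j)]
    ext j
    simp
  have hstep (i : Fin n) : α⁻¹ • (z i.succ - z i.castSucc) =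
      -EuclideanSpace.single (σ i) (G (z i.castSucc) (σ i)) := by
    rw [hz i, sub_sub_cancel_left, smul_neg, smul_smul, inv_mul_cancel₀ hα, one_smul]
  rw [← Fin.sum_univ_succ_sub_castSucc, Finset.smul_sum]
  simp_rw [hstep, PiLp.sub_apply, PiLp.single_sub, Finset.sum_sub_distrib, hG,
    Finset.sum_neg_distrib]
  abel

theorem IsCoordinateSweep.norm_inv_smul_sub_add_le (hz : IsCoordinateSweep G α σ z)
    (hα : α ≠ 0) (hθ : ∀ i : Fin n, ‖G (z 0) - G (z i.castSucc)‖ ≤ θ) :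
    ‖α⁻¹ • (z (Fin.last n) - z 0) + G (z 0)‖ ≤ n * θ := by
  rw [hz.inv_smul_sub_add_eq hα]
  calc _ ≤ ∑ i, ‖EuclideanSpace.single (σ i) ((G (z 0) - G (z i.castSucc)) (σ i))‖ :=
        norm_sum_le _ _
    _ ≤ ∑ _i : Fin n, θ := Finset.sum_le_sum fun i _ => by
        rw [PiLp.norm_single]
        exact (PiLp.norm_apply_le _ _).trans (hθ i)
    _ = n * θ := by simp

end CoordinateSweep

section CCDTrajectory

variable {n : ℕ} {f : EuclideanSpace ℝ (Fin n) → ℝ} {α M r θ T : ℝ}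
  {x : ℕ → EuclideanSpace ℝ (Fin n)}

theorem IsCCDTraj.exists_sweep (hx : IsCCDTraj f α x) (k : ℕ) :
    ∃ σ z, IsCoordinateSweep (gradient f) α σ z ∧ z 0 = x k ∧ z (Fin.last n) = x (k + 1) := by
  obtain ⟨σ, z, h0, hz, hlast⟩ := hx k
  exact ⟨σ, z, hz, h0, hlast.symm⟩

theorem IsCCDTraj.shift (hx : IsCCDTraj f α x) (m : ℕ) : IsCCDTraj f α fun k => x (m + k) :=
  fun k => hx (m + k)

theorem IsCCDTraj.dist_le (hx : IsCCDTraj f α x) (hα : 0 ≤ α) (hM0 : 0 ≤ M)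
    (hM : ∀ y ∈ closedBall (x 0) r, ‖gradient f y‖ ≤ M) {k : ℕ}
    (hk : (k + 1) * (n * (α * M)) ≤ r) : dist (x k) (x 0) ≤ k * (n * (α * M)) := by
  have hstep : 0 ≤ n * (α * M) := by positivity
  induction k with
  | zero => simp
  | succ k ih =>
    push_cast at hk ⊢
    have hdist := ih (by linarith)
    have hsub : closedBall (x k) (n * (α * M)) ⊆ closedBall (x 0) r :=
      closedBall_subset_closedBall' (by linarith)
    obtain ⟨σ, z, hz, h0, hlast⟩ := hx.exists_sweep k
    have hnext := hz.mem_closedBall hα hM0 (fun y hy => hM y (hsub (h0 ▸ hy))) (Fin.last n)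
    rw [h0, hlast, Metric.mem_closedBall] at hnext
    linarith [dist_triangle (x (k + 1)) (x k) (x 0)]

theorem IsCCDTraj.closedBall_subset (hx : IsCCDTraj f α x) (hα : 0 ≤ α) (hM0 : 0 ≤ M)
    (hM : ∀ y ∈ closedBall (x 0) r, ‖gradient f y‖ ≤ M) {k : ℕ}
    (hk : (k + 1) * (n * (α * M)) ≤ r) : closedBall (x k) (n * (α * M)) ⊆ closedBall (x 0) r :=
  closedBall_subset_closedBall' (by linarith [hx.dist_le hα hM0 hM hk])

theorem IsCCDTraj.norm_succ_sub_le (hx : IsCCDTraj f α x) (hα : 0 ≤ α) (hM0 : 0 ≤ M)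
    (hM : ∀ y ∈ closedBall (x 0) r, ‖gradient f y‖ ≤ M) {k : ℕ}
    (hk : (k + 1) * (n * (α * M)) ≤ r) : ‖x (k + 1) - x k‖ ≤ α * (n * M) := by
  obtain ⟨σ, z, hz, h0, hlast⟩ := hx.exists_sweep k
  have hsub := hx.closedBall_subset hα hM0 hM hk
  have hnext := hz.mem_closedBall hα hM0 (fun y hy => hM y (hsub (h0 ▸ hy))) (Fin.last n)
  rw [h0, hlast, Metric.mem_closedBall, dist_eq_norm] at hnext
  linarith

theorem IsCCDTraj.norm_inv_smul_sub_add_le (hx : IsCCDTraj f α x) (hα : 0 < α) (hM0 : 0 ≤ M)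
    (hM : ∀ y ∈ closedBall (x 0) r, ‖gradient f y‖ ≤ M)
    (hθ : ∀ y ∈ closedBall (x 0) r, ∀ y' ∈ closedBall (x 0) r, dist y y' ≤ n * (α * M) →
      dist (gradient f y) (gradient f y') ≤ θ) {k : ℕ}
    (hk : (k + 1) * (n * (α * M)) ≤ r) :
    ‖α⁻¹ • (x (k + 1) - x k) + gradient f (x k)‖ ≤ n * θ := by
  obtain ⟨σ, z, hz, h0, hlast⟩ := hx.exists_sweep k
  have hsub := hx.closedBall_subset hα.le hM0 hM hk
  rw [← h0] at hsub ⊢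
  have hmem := hz.mem_closedBall hα.le hM0 fun y hy => hM y (hsub hy)
  rw [← hlast]
  refine hz.norm_inv_smul_sub_add_le hα.ne' fun i => ?_
  rw [← dist_eq_norm]
  exact hθ _ (hsub (Metric.mem_closedBall_self (by positivity))) _ (hsub (hmem _))
    (by rw [dist_comm]; exact hmem _)

theorem IsCCDTraj.norm_succ_sub_le_of_le_floor (hx : IsCCDTraj f α x) (hα : 0 < α)
    (hM0 : 0 ≤ M) (hM : ∀ y ∈ closedBall (x 0) r, ‖gradient f y‖ ≤ M)
    (hr : (⌊T / α⌋₊ + 1) * (n * (α * M)) ≤ r) {k : ℕ} (hk : k ≤ ⌊T / α⌋₊) :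
    ‖x (k + 1) - x k‖ ≤ α * (n * M) :=
  hx.norm_succ_sub_le hα.le hM0 hM <| by
    have : (k : ℝ) ≤ ⌊T / α⌋₊ := by exact_mod_cast hk
    nlinarith [show 0 ≤ n * (α * M) by positivity]

theorem IsCCDTraj.polygonalPath_mem_closedBall (hx : IsCCDTraj f α x) (hα : 0 < α)
    (hM0 : 0 ≤ M) (hM : ∀ y ∈ closedBall (x 0) r, ‖gradient f y‖ ≤ M)
    (hr : (⌊T / α⌋₊ + 1) * (n * (α * M)) ≤ r) {t : ℝ} (ht : t ∈ Icc 0 T) :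
    polygonalPath α ⌊T / α⌋₊ x t ∈ closedBall (x 0) r := by
  have hT := lt_floor_div_add_one_mul hα T
  have hLip := norm_polygonalPath_sub_le hα
    (fun k hk => hx.norm_succ_sub_le_of_le_floor hα hM0 hM hr hk) 0 t
  rw [polygonalPath_zero, sub_zero, abs_of_nonneg ht.1] at hLip
  rw [Metric.mem_closedBall, dist_eq_norm]
  nlinarith [ht.2, show 0 ≤ (n : ℝ) * M by positivity]

theorem IsCCDTraj.isApproxIntegralSolution_polygonalPath (hx : IsCCDTraj f α x)
    (hG : Continuous (gradient f)) (hα : 0 < α) (hM0 : 0 ≤ M)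
    (hM : ∀ y ∈ closedBall (x 0) r, ‖gradient f y‖ ≤ M)
    (hθ : ∀ y ∈ closedBall (x 0) r, ∀ y' ∈ closedBall (x 0) r, dist y y' ≤ n * (α * M) →
      dist (gradient f y) (gradient f y') ≤ θ)
    (hr : (⌊T / α⌋₊ + 1) * (n * (α * M)) ≤ r) :
    IsApproxIntegralSolution (-gradient f) T (T * ((n + 1) * θ)) (polygonalPath α ⌊T / α⌋₊ x) := by
  set N := ⌊T / α⌋₊
  set γ := polygonalPath α N x
  have hstep : ∀ k ≤ N, ‖x (k + 1) - x k‖ ≤ α * (n * M) := fun k hk =>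
    hx.norm_succ_sub_le_of_le_floor hα hM0 hM hr hk
  have hTN : T ≤ (N + 1) * α := (lt_floor_div_add_one_mul hα T).le
  intro t ht
  have hbound : ∀ s ∈ Ι 0 t, ‖polygonalSlope α N x s + gradient f (γ s)‖ ≤ (n + 1) * θ := by
    intro s hs
    rw [uIoc_of_le ht.1] at hs
    have hsT : s ∈ Icc 0 T := ⟨hs.1.le, hs.2.trans ht.2⟩
    set k := min ⌊s / α⌋₊ N
    have hk : (k + 1) * (n * (α * M)) ≤ r := by
      have : (k : ℝ) ≤ N := by exact_mod_cast min_le_right _ N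
      nlinarith [show 0 ≤ n * (α * M) by positivity]
    have hγk : dist (γ s) (x k) ≤ n * (α * M) := by
      rw [dist_eq_norm, ← mul_left_comm]
      exact norm_polygonalPath_sub_vertex_le hα hstep hsT.1 (hsT.2.trans hTN)
    have hxk : x k ∈ closedBall (x 0) r :=
      hx.closedBall_subset hα.le hM0 hM hk (mem_closedBall_self (by positivity))
    calc ‖polygonalSlope α N x s + gradient f (γ s)‖
        = ‖(α⁻¹ • (x (k + 1) - x k) + gradient f (x k)) +
            (gradient f (γ s) - gradient f (x k))‖ := by
          change ‖α⁻¹ • (x (k + 1) - x k) + _‖ = _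
          congr 1
          abel
      _ ≤ n * θ + θ := norm_add_le_of_le (hx.norm_inv_smul_sub_add_le hα hM0 hM hθ hk)
          (dist_eq_norm (gradient f (γ s)) _ ▸
            hθ _ (hx.polygonalPath_mem_closedBall hα hM0 hM hr hsT) _ hxk hγk)
      _ = (n + 1) * θ := by ring
  have hγc : Continuous (fun s => gradient f (γ s)) :=
    hG.comp (lipschitzWith_polygonalPath hα hstep).continuous
  have heq : γ t - γ 0 - ∫ s in (0 : ℝ)..t, (-gradient f) (γ s) =
      ∫ s in (0 : ℝ)..t, (polygonalSlope α N x s + gradient f (γ s)) := by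
    rw [polygonalPath_sub, intervalIntegral.integral_add (intervalIntegrable_polygonalSlope ..)
      (hγc.intervalIntegrable _ _)]
    simp only [Pi.neg_apply, intervalIntegral.integral_neg, sub_neg_eq_add]
  have hr0 : 0 ≤ r := (by positivity : (0 : ℝ) ≤ (N + 1) * (n * (α * M))).trans hr
  have hθ0 : 0 ≤ θ := by
    simpa using hθ _ (mem_closedBall_self hr0) _ (mem_closedBall_self hr0) (by simp; positivity)
  rw [heq]
  refine (intervalIntegral.norm_integral_le_of_norm_le_const hbound).trans ?_
  rw [sub_zero, abs_of_nonneg ht.1, mul_comm]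
  exact mul_le_mul_of_nonneg_right ht.2 (by positivity)

end CCDTrajectory

theorem exists_stepSize_polygonalPath_isApproxIntegralSolution {n : ℕ}
    {f : EuclideanSpace ℝ (Fin n) → ℝ} (hG : Continuous (gradient f)) {R M T : ℝ} (hM0 : 0 ≤ M)
    (hM : ∀ y ∈ closedBall 0 (R + 1), ‖gradient f y‖ ≤ M) (hT : 0 < T) (hTM : 2 * T * (n * M) ≤ 1)
    {δ : ℝ} (hδ : 0 < δ) :
    ∃ ᾱ > 0, ∀ α, 0 < α → α ≤ ᾱ → ∀ x, IsCCDTraj f α x → x 0 ∈ closedBall 0 R →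
      LipschitzWith (n * M).toNNReal (polygonalPath α ⌊T / α⌋₊ x) ∧
      MapsTo (polygonalPath α ⌊T / α⌋₊ x) (Icc 0 T) (closedBall 0 (R + 1)) ∧
      IsApproxIntegralSolution (-gradient f) T δ (polygonalPath α ⌊T / α⌋₊ x) := by
  obtain ⟨d, hd, hθd⟩ := Metric.uniformContinuousOn_iff_le.1
    ((isCompact_closedBall 0 (R + 1)).uniformContinuousOn_of_continuous hG.continuousOn)
    (δ / (T * (n + 1))) (by positivity)
  refine ⟨min T (d / (n * M + 1)), lt_min hT (by positivity), fun α hα hαᾱ x hx hx0 => ?_⟩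
  have hball : closedBall (x 0) 1 ⊆ closedBall 0 (R + 1) :=
    closedBall_subset_closedBall' (by linarith [Metric.mem_closedBall.1 hx0])
  have hαd : n * (α * M) ≤ d := by
    have := (le_div_iff₀ (by positivity)).1 (hαᾱ.trans (min_le_right _ _))
    nlinarith
  have hr : (⌊T / α⌋₊ + 1) * (n * (α * M)) ≤ 1 := by
    have hN := floor_div_mul_le hα hT.le
    nlinarith [hαᾱ.trans (min_le_left _ _), show 0 ≤ (n : ℝ) * M by positivity]
  have hMx : ∀ y ∈ closedBall (x 0) 1, ‖gradient f y‖ ≤ M := fun y hy => hM y (hball hy)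
  refine ⟨lipschitzWith_polygonalPath hα fun k hk =>
      hx.norm_succ_sub_le_of_le_floor hα hM0 hMx hr hk,
    fun t ht => hball (hx.polygonalPath_mem_closedBall hα hM0 hMx hr ht), ?_⟩
  have happrox := hx.isApproxIntegralSolution_polygonalPath hG hα hM0 hMx
    (fun y hy y' hy' hyy' => hθd y (hball hy) y' (hball hy') (hyy'.trans hαd)) hr
  rwa [← mul_assoc, mul_div_cancel₀ δ (by positivity)] at happrox

theorem stmt_11_general {n : ℕ} (f : EuclideanSpace ℝ (Fin n) → ℝ)
    (hf : ContDiff ℝ 1 f)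
    (X₀ : Set (EuclideanSpace ℝ (Fin n))) (hX₀ : IsCompact X₀) :
    ∃ T : ℝ, 0 < T ∧
      ∀ ε : ℝ, 0 < ε →
        ∃ ᾱ : ℝ, 0 < ᾱ ∧
          ∀ α : ℝ, 0 < α → α ≤ ᾱ → ∀ kbar : ℕ,
            ∀ xs : ℕ → EuclideanSpace ℝ (Fin n), IsCCDTraj f α xs → xs kbar ∈ X₀ →
              ∃ x : ℝ → EuclideanSpace ℝ (Fin n),
                x 0 ∈ X₀ ∧
                (∀ t ∈ Set.Icc (0 : ℝ) T, HasDerivAt x (-gradient f (x t)) t) ∧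
                ∀ k : ℕ, kbar ≤ k → k ≤ kbar + ⌊T / α⌋₊ →
                  ‖xs k - x (((k - kbar : ℕ) : ℝ) * α)‖ ≤ ε := by
  have hG := hf.continuous_gradient
  obtain ⟨R, hX₀R⟩ := hX₀.isBounded.subset_closedBall 0
  obtain ⟨M, hM0, hM⟩ : ∃ M, 0 ≤ M ∧ ∀ y ∈ closedBall 0 (R + 1), ‖gradient f y‖ ≤ M := by
    obtain ⟨M, hM⟩ := (isCompact_closedBall 0 (R + 1)).exists_bound_of_continuousOn hG.continuousOn
    exact ⟨max M 0, le_max_right _ _, fun y hy => (hM y hy).trans (le_max_left _ _)⟩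
  -- for `α ≤ T`, the first `⌊T / α⌋₊ + 1` sweeps, each of length at most `n α M`, move the
  -- iterate by at most `2 T n M ≤ 1`
  set T : ℝ := 1 / (2 * (n * M + 1))
  have hT : 0 < T := by positivity
  have hTM : 2 * T * (n * M) ≤ 1 := by
    simp only [T]
    field_simp
    linarith
  refine ⟨T, hT, fun ε hε => ?_⟩
  obtain ⟨δ, hδ, hsol⟩ := exists_solution_near_isApproxIntegralSolution hG.neg
    (isCompact_closedBall 0 (R + 1)) hX₀.isClosed (n * M).toNNReal hT.le hε
  obtain ⟨ᾱ, hᾱ, happrox⟩ :=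
    exists_stepSize_polygonalPath_isApproxIntegralSolution hG hM0 hM hT hTM hδ
  refine ⟨ᾱ, hᾱ, fun α hα hαᾱ kbar xs hxs hkbar => ?_⟩
  obtain ⟨hγL, hγK, hγ⟩ := happrox α hα hαᾱ _ (hxs.shift kbar) (hX₀R hkbar)
  obtain ⟨x, hx0, hx', hγx⟩ := hsol _ hγL.lipschitzOnWith hγK (by simpa using hkbar) hγ
  refine ⟨x, hx0, hx', fun k hk₁ hk₂ => ?_⟩
  obtain ⟨m, rfl⟩ := Nat.exists_eq_add_of_le hk₁
  have hm : (m : ℝ) * α ≤ ⌊T / α⌋₊ * α := by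
    gcongr
    exact_mod_cast (by omega : m ≤ _)
  have hmT : (m : ℝ) * α ∈ Icc 0 T := ⟨by positivity, hm.trans (floor_div_mul_le hα hT.le)⟩
  rw [Nat.add_sub_cancel_left, ← dist_eq_norm]
  have := hγx _ hmT
  rwa [polygonalPath_nat_mul hα (by omega)] at this

theorem stmt_11 {n : ℕ} (hn : 1 ≤ n) (f : EuclideanSpace ℝ (Fin n) → ℝ)
    (hf : ContDiff ℝ 1 f)
    (X₀ : Set (EuclideanSpace ℝ (Fin n))) (hX₀ : IsCompact X₀) :
    ∃ T : ℝ, 0 < T ∧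
      ∀ ε : ℝ, 0 < ε →
        ∃ ᾱ : ℝ, 0 < ᾱ ∧
          ∀ α : ℝ, 0 < α → α ≤ ᾱ → ∀ kbar : ℕ,
            ∀ xs : ℕ → EuclideanSpace ℝ (Fin n), IsCCDTraj f α xs → xs kbar ∈ X₀ →
              ∃ x : ℝ → EuclideanSpace ℝ (Fin n),
                x 0 ∈ X₀ ∧
                (∀ t ∈ Set.Icc (0 : ℝ) T, HasDerivAt x (-gradient f (x t)) t) ∧
                ∀ k : ℕ, kbar ≤ k → k ≤ kbar + ⌊T / α⌋₊ →
                  ‖xs k - x (((k - kbar : ℕ) : ℝ) * α)‖ ≤ ε :=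
  stmt_11_general f hf X₀ hX₀
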